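/- For n ≥ 1, the monoid End P_n is regular (every element is regular) if and only if n ≤ 5. -/

import Mathlib

/-!
An endomorphism of a path is `1`-Lipschitz for the path metric. If `f * g * f = f`, then `g`
maps each point `f x` of the image of `f` into its fibre, so for a regular `f` any two fibres
contain points no farther apart than the corresponding image points. For `n ≥ 6` the
endomorphism `1, 2, 3, 2, 3, 4, 3, 4, …` (vertices counted from `0`) violates this: the fibre
of `1` is `{0}` and the fibre of `4` lies in `[5, n)`, although `|1 - 4| = 3`. For `n ≤ 5`,
regularity is a finite check.
-/

/-- `α` is a weak endomorphism of the path `P_n` (with vertices `0,…,n-1` standing for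
`1,…,n`): `|iα - (i+1)α| ≤ 1` for all consecutive pairs of vertices. -/
def IsWEndo {n : ℕ} (f : Function.End (Fin n)) : Prop :=
  ∀ i : ℕ, ∀ h : i + 1 < n,
    |(((f ⟨i, by omega⟩ : Fin n) : ℕ) : ℤ) - (((f ⟨i + 1, h⟩ : Fin n) : ℕ) : ℤ)| ≤ 1

/-- `α` is an endomorphism of the path `P_n`: `|iα - (i+1)α| = 1` for all consecutive
pairs of vertices. -/
def IsEndo {n : ℕ} (f : Function.End (Fin n)) : Prop :=
  ∀ i : ℕ, ∀ h : i + 1 < n,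
    |(((f ⟨i, by omega⟩ : Fin n) : ℕ) : ℤ) - (((f ⟨i + 1, h⟩ : Fin n) : ℕ) : ℤ)| = 1

section
variable {n : ℕ}

lemma IsEndo.isWEndo {f : Function.End (Fin n)} (hf : IsEndo f) : IsWEndo f :=
  fun i h => (hf i h).le

lemma IsWEndo.abs_apply_sub_apply_le {g : Function.End (Fin n)} (hg : IsWEndo g) (i j : Fin n) :
    |((g i : ℕ) : ℤ) - (g j : ℕ)| ≤ |((i : ℕ) : ℤ) - (j : ℕ)| := by
  have shift : ∀ k i (h : i + k < n),
      |((g ⟨i, by omega⟩ : ℕ) : ℤ) - (g ⟨i + k, h⟩ : ℕ)| ≤ k := by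
    intro k
    induction k with
    | zero => simp
    | succ k ih =>
      intro i h
      calc |((g ⟨i, by omega⟩ : ℕ) : ℤ) - (g ⟨i + k + 1, h⟩ : ℕ)|
          ≤ |((g ⟨i, by omega⟩ : ℕ) : ℤ) - (g ⟨i + k, by omega⟩ : ℕ)|
            + |((g ⟨i + k, by omega⟩ : ℕ) : ℤ) - (g ⟨i + k + 1, h⟩ : ℕ)| := abs_sub_le _ _ _
        _ ≤ k + 1 := add_le_add (ih i (by omega)) (hg (i + k) h)
        _ = (k + 1 : ℕ) := by push_cast; ring
  wlog hij : i ≤ j generalizing i j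
  · rw [abs_sub_comm, abs_sub_comm (i : ℤ)]
    exact this j i (le_of_not_ge hij)
  obtain ⟨i, hi⟩ := i
  obtain ⟨j, hj⟩ := j
  obtain ⟨k, rfl⟩ := Nat.exists_eq_add_of_le (Fin.mk_le_mk.mp hij)
  simpa [abs_sub_comm (i : ℤ)] using shift k i hj

lemma exists_close_preimages_of_mul_mul_eq {f g : Function.End (Fin n)} (hg : IsWEndo g)
    (hfgf : f * g * f = f) (x y : Fin n) :
    ∃ x' y', f x' = f x ∧ f y' = f y ∧
      |((x' : ℕ) : ℤ) - (y' : ℕ)| ≤ |((f x : ℕ) : ℤ) - (f y : ℕ)| :=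
  ⟨g (f x), g (f y), congrFun hfgf x, congrFun hfgf y, hg.abs_apply_sub_apply_le _ _⟩

instance (f : Function.End (Fin n)) : Decidable (IsEndo f) :=
  decidable_of_iff (∀ i : Fin (n - 1),
      |((f ⟨i, by omega⟩ : ℕ) : ℤ) - ((f ⟨i + 1, by omega⟩ : ℕ) : ℤ)| = 1)
    ⟨fun h i hi => h ⟨i, by omega⟩, fun h i => h i (by omega)⟩

instance : Fintype (Function.End (Fin n)) := inferInstanceAs (Fintype (Fin n → Fin n))

instance : DecidableEq (Function.End (Fin n)) := inferInstanceAs (DecidableEq (Fin n → Fin n))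

end

def PathEndRegular (n : ℕ) : Prop :=
  ∀ f : Function.End (Fin n), IsEndo f → ∃ g : Function.End (Fin n), IsEndo g ∧ f * g * f = f

instance (n : ℕ) : Decidable (PathEndRegular n) := by
  unfold PathEndRegular; infer_instance

set_option maxRecDepth 100000 in
theorem pathEndRegular_of_le_five {n : ℕ} (hn : n ≤ 5) : PathEndRegular n := by
  interval_cases n <;> decide +kernel

def stairs (i : ℕ) : ℕ :=
  if i < 3 then i + 1 else if i = 3 then 2 else 3 + i % 2

lemma stairs_le (i : ℕ) : stairs i ≤ 4 := by
  unfold stairs; split_ifs <;> omega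

lemma abs_stairs_sub_stairs_succ (i : ℕ) : |(stairs i : ℤ) - stairs (i + 1)| = 1 := by
  rw [abs_eq zero_le_one]
  unfold stairs; split_ifs <;> omega

lemma eq_zero_of_stairs_eq_one {j : ℕ} (h : stairs j = 1) : j = 0 := by
  unfold stairs at h; split_ifs at h <;> omega

lemma five_le_of_stairs_eq_four {j : ℕ} (h : stairs j = 4) : 5 ≤ j := by
  unfold stairs at h; split_ifs at h <;> omega

theorem not_pathEndRegular_of_six_le {n : ℕ} (hn : 6 ≤ n) : ¬ PathEndRegular n := by
  intro H
  let f : Function.End (Fin n) := fun i => ⟨stairs i, by have := stairs_le i; omega⟩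
  obtain ⟨g, hg, hfgf⟩ := H f fun i _ => abs_stairs_sub_stairs_succ i
  obtain ⟨x', y', hx', hy', hclose⟩ :=
    exists_close_preimages_of_mul_mul_eq hg.isWEndo hfgf ⟨0, by omega⟩ ⟨5, by omega⟩
  have hx'0 : (x' : ℕ) = 0 :=
    eq_zero_of_stairs_eq_one ((congrArg Fin.val hx').trans (by decide : stairs 0 = 1))
  have hy'5 : 5 ≤ (y' : ℕ) :=
    five_le_of_stairs_eq_four ((congrArg Fin.val hy').trans (by decide : stairs 5 = 4))
  have himage : |((f ⟨0, by omega⟩ : ℕ) : ℤ) - (f ⟨5, by omega⟩ : ℕ)| = 3 := by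
    simp [f, stairs]
  rw [himage, hx'0, abs_le] at hclose
  omega

theorem End_path_regular_iff_general (n : ℕ) :
    (∀ f : Function.End (Fin n), IsEndo f →
        ∃ g : Function.End (Fin n), IsEndo g ∧ f * g * f = f) ↔ n ≤ 5 :=
  ⟨fun h => not_lt.mp fun h6 => not_pathEndRegular_of_six_le h6 h, pathEndRegular_of_le_five⟩

/-- The monoid `End P_n` is regular if and only if `n ≤ 5`. -/
theorem End_path_regular_iff (n : ℕ) (hn : 1 ≤ n) :
    (∀ f : Function.End (Fin n), IsEndo f →
        ∃ g : Function.End (Fin n), IsEndo g ∧ f * g * f = f) ↔ n ≤ 5 :=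
  End_path_regular_iff_general n
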